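/- arXiv:1909.08860 — 2 statements merged into one kernel-verified Lean document; each statement's English description precedes it below -/
import Mathlib

section
/- The planar winding map w(r,θ) = (r/√2, 2θ) in polar coordinates, i.e. w(z) = z²/(√2·|z|) for z ≠ 0 and w(0) = 0, satisfies the length distortion bounds: for every rectifiable path α in ℝ² ≅ ℂ, (1/√2)·ℓ(α) ≤ ℓ(w ∘ α) ≤ √2·ℓ(α). -/
/-!
Write `w = q / √2` with `q z = z² / |z|`. With `r = |z|`, `s = |z'|` and `P = ⟪z, z'⟫`, one computes
`r s |q z - q z'|² = r s (r + s)² - 4 P²`; hence `|q z - q z'| ≤ 2 |z - z'|`, so `w` is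
`√2`-Lipschitz, and `|z - z'| ≤ |q z - q z'|` whenever `P ≥ 0`. As `q (-z) = q z`, the latter also
bounds `|z + z'|` when `P ≤ 0`. A chord from `α s` to `α t` with `⟪α s, α t⟫ < 0` is split at a
time `u` with `α u ⊥ α s` (intermediate value theorem): for suitable signs, `|α s - α t|` is at most
`|α s ∓ α u| + |α u ∓ α t|`, hence at most `√2` times the variation of `w ∘ α` on `[s, t]`.
Summing over a partition gives the lower bound.
-/

open Set Metric

/-- The planar winding map `w(z) = z²/(√2·|z|)` for `z ≠ 0`, `w 0 = 0`. -/
noncomputable def windingMap (z : ℂ) : ℂ :=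
  if z = 0 then 0 else z ^ 2 / ((Real.sqrt 2 : ℂ) * (‖z‖ : ℂ))

open scoped ENNReal InnerProductSpace

theorem eVariationOn.le_mul_of_edist_le {α E F : Type*} [LinearOrder α] [PseudoEMetricSpace E]
    [PseudoEMetricSpace F] {f : α → E} {g : α → F} {s : Set α} {C : ℝ≥0∞}
    (h : ∀ x ∈ s, ∀ y ∈ s, x ≤ y → edist (f x) (f y) ≤ C * eVariationOn g (s ∩ Icc x y)) :
    eVariationOn f s ≤ C * eVariationOn g s := by
  refine iSup_le fun ⟨n, u, hu, us⟩ => ?_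
  calc ∑ i ∈ Finset.range n, edist (f (u (i + 1))) (f (u i))
      ≤ ∑ i ∈ Finset.range n, C * eVariationOn g (s ∩ Icc (u i) (u (i + 1))) :=
        Finset.sum_le_sum fun i _ => by
          rw [edist_comm]
          exact h _ (us i) _ (us (i + 1)) (hu i.le_succ)
    _ = C * eVariationOn g (s ∩ Icc (u 0) (u n)) := by
        rw [← Finset.mul_sum, eVariationOn.sum g hu fun i _ _ => us i]
    _ ≤ C * eVariationOn g s := by
        gcongr
        exact eVariationOn.mono g inter_subset_left

/-- In polar coordinates `(r, θ) ↦ (r, 2θ)`. -/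
noncomputable def angleDoubling (z : ℂ) : ℂ := z ^ 2 / ‖z‖

@[simp]
theorem angleDoubling_zero : angleDoubling 0 = 0 := by
  simp [angleDoubling]

@[simp]
theorem angleDoubling_neg (z : ℂ) : angleDoubling (-z) = angleDoubling z := by
  simp [angleDoubling]

@[simp]
theorem norm_angleDoubling (z : ℂ) : ‖angleDoubling z‖ = ‖z‖ := by
  rcases eq_or_ne z 0 with rfl | hz
  · simp [angleDoubling]
  · rw [angleDoubling, norm_div, norm_pow, Complex.norm_real, norm_norm, sq,
      mul_div_cancel_right₀ _ (norm_ne_zero_iff.2 hz)]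

theorem norm_mul_norm_mul_norm_angleDoubling_sub_sq (z z' : ℂ) :
    ‖z‖ * ‖z'‖ * ‖angleDoubling z - angleDoubling z'‖ ^ 2 =
      ‖z‖ * ‖z'‖ * (‖z‖ + ‖z'‖) ^ 2 - 4 * ⟪z, z'⟫_ℝ ^ 2 := by
  rcases eq_or_ne z 0 with rfl | hz
  · simp
  rcases eq_or_ne z' 0 with rfl | hz'
  · simp
  have hr : ‖z‖ ^ 2 = z.re ^ 2 + z.im ^ 2 := by
    rw [Complex.sq_norm, Complex.normSq_apply]; ring
  have hs : ‖z'‖ ^ 2 = z'.re ^ 2 + z'.im ^ 2 := by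
    rw [Complex.sq_norm, Complex.normSq_apply]; ring
  have hr0 : ‖z‖ ≠ 0 := norm_ne_zero_iff.2 hz
  have hs0 : ‖z'‖ ≠ 0 := norm_ne_zero_iff.2 hz'
  rw [Complex.sq_norm, Complex.normSq_apply, Complex.inner]
  simp only [angleDoubling, Complex.sub_re, Complex.sub_im, Complex.div_ofReal_re,
    Complex.div_ofReal_im, pow_two, Complex.mul_re, Complex.mul_im, Complex.conj_re,
    Complex.conj_im]
  field_simp
  linear_combination
    (-(‖z'‖ ^ 2 * (z.re ^ 2 + z.im ^ 2 + ‖z‖ ^ 2) + 2 * ‖z‖ * ‖z'‖ * (z'.re ^ 2 + z'.im ^ 2))) * hr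
    + (-(‖z‖ ^ 2 * (z'.re ^ 2 + z'.im ^ 2 + ‖z'‖ ^ 2) + 2 * ‖z‖ * ‖z'‖ * ‖z‖ ^ 2)) * hs

theorem norm_angleDoubling_sub_le (z z' : ℂ) :
    ‖angleDoubling z - angleDoubling z'‖ ≤ 2 * ‖z - z'‖ := by
  rcases eq_or_ne z 0 with rfl | hz
  · simp only [angleDoubling_zero, zero_sub, norm_neg, norm_angleDoubling]
    linarith [norm_nonneg z']
  rcases eq_or_ne z' 0 with rfl | hz'
  · simp only [angleDoubling_zero, sub_zero, norm_angleDoubling]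
    linarith [norm_nonneg z]
  have hrs : 0 < ‖z‖ * ‖z'‖ := by positivity
  have hP : ⟪z, z'⟫_ℝ ≤ ‖z‖ * ‖z'‖ := real_inner_le_norm z z'
  refine (pow_le_pow_iff_left₀ (norm_nonneg _) (by positivity) two_ne_zero).1 ?_
  refine le_of_mul_le_mul_left ?_ hrs
  rw [norm_mul_norm_mul_norm_angleDoubling_sub_sq, mul_pow, norm_sub_sq_real]
  -- the difference is `3 r s (r - s)² + 4 (r s - P)²`
  nlinarith [mul_nonneg hrs.le (sq_nonneg (‖z‖ - ‖z'‖)), sq_nonneg (‖z‖ * ‖z'‖ - ⟪z, z'⟫_ℝ)]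

theorem norm_sub_le_norm_angleDoubling_sub {z z' : ℂ} (h : 0 ≤ ⟪z, z'⟫_ℝ) :
    ‖z - z'‖ ≤ ‖angleDoubling z - angleDoubling z'‖ := by
  rcases eq_or_ne z 0 with rfl | hz
  · simp
  rcases eq_or_ne z' 0 with rfl | hz'
  · simp
  have hrs : 0 < ‖z‖ * ‖z'‖ := by positivity
  have hP : ⟪z, z'⟫_ℝ ≤ ‖z‖ * ‖z'‖ := real_inner_le_norm z z'
  refine (pow_le_pow_iff_left₀ (norm_nonneg _) (norm_nonneg _) two_ne_zero).1 ?_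
  refine le_of_mul_le_mul_left ?_ hrs
  rw [norm_mul_norm_mul_norm_angleDoubling_sub_sq, norm_sub_sq_real]
  -- the difference is `2 (r s - P) (r s + 2 P)`
  nlinarith [mul_nonneg (sub_nonneg.2 hP) (by positivity : 0 ≤ ‖z‖ * ‖z'‖ + 2 * ⟪z, z'⟫_ℝ)]

theorem norm_add_le_norm_angleDoubling_sub {z z' : ℂ} (h : ⟪z, z'⟫_ℝ ≤ 0) :
    ‖z + z'‖ ≤ ‖angleDoubling z - angleDoubling z'‖ := by
  have := norm_sub_le_norm_angleDoubling_sub (z := z) (z' := -z')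
    (by rw [inner_neg_right]; linarith)
  rwa [sub_neg_eq_add, angleDoubling_neg] at this

theorem norm_sub_le_or_norm_add_le_norm_angleDoubling_sub (z z' : ℂ) :
    ‖z - z'‖ ≤ ‖angleDoubling z - angleDoubling z'‖ ∨
      ‖z + z'‖ ≤ ‖angleDoubling z - angleDoubling z'‖ :=
  (le_total 0 ⟪z, z'⟫_ℝ).imp norm_sub_le_norm_angleDoubling_sub
    norm_add_le_norm_angleDoubling_sub

theorem exists_norm_sub_le_norm_angleDoubling_comp_sub_add {α : ℝ → ℂ} {s t : ℝ}
    (hα : ContinuousOn α (Icc s t)) (hst : s ≤ t) :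
    ∃ u ∈ Icc s t, ‖α s - α t‖ ≤ ‖angleDoubling (α s) - angleDoubling (α u)‖ +
      ‖angleDoubling (α u) - angleDoubling (α t)‖ := by
  rcases le_or_gt 0 ⟪α s, α t⟫_ℝ with h | h
  · exact ⟨t, right_mem_Icc.2 hst, by simpa using norm_sub_le_norm_angleDoubling_sub h⟩
  obtain ⟨u, hu, hu0⟩ : ∃ u ∈ Icc s t, ⟪α s, α u⟫_ℝ = 0 := by
    refine intermediate_value_Icc' hst ?_ ⟨h.le, ?_⟩
    · exact continuousOn_const.inner hα
    · exact real_inner_self_nonneg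
  refine ⟨u, hu, ?_⟩
  rcases norm_sub_le_or_norm_add_le_norm_angleDoubling_sub (α u) (α t) with hut | hut
  · calc ‖α s - α t‖ ≤ ‖α s - α u‖ + ‖α u - α t‖ := norm_sub_le_norm_sub_add_norm_sub _ _ _
      _ ≤ _ := add_le_add (norm_sub_le_norm_angleDoubling_sub hu0.ge) hut
  · calc ‖α s - α t‖ = ‖(α s + α u) - (α u + α t)‖ := by congr 1; ring
      _ ≤ ‖α s + α u‖ + ‖α u + α t‖ := norm_sub_le _ _
      _ ≤ _ := add_le_add (norm_add_le_norm_angleDoubling_sub hu0.le) hut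

theorem windingMap_eq_angleDoubling_div (z : ℂ) :
    windingMap z = angleDoubling z / (Real.sqrt 2 : ℂ) := by
  rw [windingMap, angleDoubling]
  split_ifs with hz
  · simp [hz]
  · rw [div_div, mul_comm]

theorem sqrt_two_mul_norm_windingMap_sub (z z' : ℂ) :
    Real.sqrt 2 * ‖windingMap z - windingMap z'‖ = ‖angleDoubling z - angleDoubling z'‖ := by
  rw [windingMap_eq_angleDoubling_div, windingMap_eq_angleDoubling_div, ← sub_div, norm_div,
    Complex.norm_real, Real.norm_of_nonneg (Real.sqrt_nonneg 2)]
  field_simp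

theorem lipschitzWith_windingMap : LipschitzWith (Real.toNNReal (Real.sqrt 2)) windingMap := by
  refine LipschitzWith.of_dist_le_mul fun z z' => ?_
  rw [dist_eq_norm, dist_eq_norm, Real.coe_toNNReal _ (Real.sqrt_nonneg 2)]
  refine le_of_mul_le_mul_left ?_ (Real.sqrt_pos.2 two_pos)
  rw [sqrt_two_mul_norm_windingMap_sub, ← mul_assoc, Real.mul_self_sqrt zero_le_two]
  exact norm_angleDoubling_sub_le z z'

theorem edist_le_ofReal_sqrt_two_mul_eVariationOn_windingMap_comp {α : ℝ → ℂ} {s t : ℝ}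
    (hα : ContinuousOn α (Icc s t)) (hst : s ≤ t) :
    edist (α s) (α t) ≤
      ENNReal.ofReal (Real.sqrt 2) * eVariationOn (windingMap ∘ α) (Icc s t) := by
  obtain ⟨u, hu, h⟩ := exists_norm_sub_le_norm_angleDoubling_comp_sub_add hα hst
  rw [← sqrt_two_mul_norm_windingMap_sub, ← sqrt_two_mul_norm_windingMap_sub, ← mul_add] at h
  have hsplit := eVariationOn.Icc_add_Icc (windingMap ∘ α) (s := univ) hu.1 hu.2 (mem_univ u)
  simp only [univ_inter] at hsplit
  calc edist (α s) (α t) = ENNReal.ofReal ‖α s - α t‖ := by rw [edist_dist, dist_eq_norm]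
    _ ≤ ENNReal.ofReal (Real.sqrt 2 * (‖windingMap (α s) - windingMap (α u)‖ +
          ‖windingMap (α u) - windingMap (α t)‖)) := ENNReal.ofReal_le_ofReal h
    _ = ENNReal.ofReal (Real.sqrt 2) * (edist ((windingMap ∘ α) s) ((windingMap ∘ α) u) +
          edist ((windingMap ∘ α) u) ((windingMap ∘ α) t)) := by
        rw [ENNReal.ofReal_mul (Real.sqrt_nonneg 2), ENNReal.ofReal_add (norm_nonneg _)
          (norm_nonneg _), edist_dist, edist_dist, dist_eq_norm, dist_eq_norm]
        rfl
    _ ≤ ENNReal.ofReal (Real.sqrt 2) * eVariationOn (windingMap ∘ α) (Icc s t) := by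
        rw [← hsplit]
        gcongr
        exacts [eVariationOn.edist_le _ (left_mem_Icc.2 hu.1) (right_mem_Icc.2 hu.1),
          eVariationOn.edist_le _ (left_mem_Icc.2 hu.2) (right_mem_Icc.2 hu.2)]

/-- The winding map satisfies the length distortion bounds
`(1/√2)·ℓ(α) ≤ ℓ(w∘α) ≤ √2·ℓ(α)` for every rectifiable path `α`. -/
theorem windingMap_length_distortion (α : ℝ → ℂ)
    (hα : ContinuousOn α (Icc 0 1)) :
    ENNReal.ofReal (Real.sqrt 2)⁻¹ * eVariationOn α (Icc 0 1) ≤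
        eVariationOn (windingMap ∘ α) (Icc 0 1) ∧
      eVariationOn (windingMap ∘ α) (Icc 0 1) ≤
        ENNReal.ofReal (Real.sqrt 2) * eVariationOn α (Icc 0 1) := by
  refine ⟨?_, ?_⟩
  · have hlow : eVariationOn α (Icc 0 1) ≤
        ENNReal.ofReal (Real.sqrt 2) * eVariationOn (windingMap ∘ α) (Icc 0 1) :=
      eVariationOn.le_mul_of_edist_le fun x hx y hy hxy => by
        rw [inter_eq_self_of_subset_right (Icc_subset_Icc hx.1 hy.2)]
        exact edist_le_ofReal_sqrt_two_mul_eVariationOn_windingMap_comp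
          (hα.mono (Icc_subset_Icc hx.1 hy.2)) hxy
    rwa [ENNReal.ofReal_inv_of_pos (Real.sqrt_pos.2 two_pos),
      ENNReal.inv_mul_le_iff (by simp) ENNReal.ofReal_ne_top]
  · exact lipschitzWith_windingMap.lipschitzOnWith.comp_eVariationOn_le (mapsTo_univ _ _)
end

section
/- Let h : Sⁿ⁻¹ → Sⁿ⁻¹ (n ≥ 2) be defined from a map g : ℝⁿ → ℝⁿ satisfying L⁻¹‖x‖ ≤ ‖g(x)‖ ≤ L‖x‖ and whose restriction to the sphere ∂B(0,r) is L-Lipschitz, by h(x) = (L/r)·p(g(rx)) where p is the radial projection onto ∂B(0, r/L). Then h is L²-Lipschitz. -/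
/-!
Since `(L/r)·(r/L) = 1`, the map is `x ↦ g(rx)/‖g(rx)‖`: a composition of the dilation by `r`
(`r`-Lipschitz) onto `∂B(0,r)`, the map `g` (`L`-Lipschitz there), which lands outside the open
ball `B(0, r/L)`, and the normalization `a ↦ a/‖a‖`, which is `(L/r)`-Lipschitz outside that
ball. In an inner product space the last fact comes from the identity
`‖a - b‖² = (‖a‖ - ‖b‖)² + ‖a‖‖b‖·‖a/‖a‖ - b/‖b‖‖²`.
-/

open Set Metric NNReal

section Normalization

variable {E : Type*} [NormedAddCommGroup E] [InnerProductSpace ℝ E]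

theorem norm_sub_sq_eq_sq_sub_norm_add_mul_norm_inv_smul_sub_sq (a b : E) :
    ‖a - b‖ ^ 2 = (‖a‖ - ‖b‖) ^ 2 + ‖a‖ * ‖b‖ * ‖‖a‖⁻¹ • a - ‖b‖⁻¹ • b‖ ^ 2 := by
  rcases eq_or_ne a 0 with rfl | ha
  · simp
  rcases eq_or_ne b 0 with rfl | hb
  · simp
  have ha' : ‖a‖ ≠ 0 := norm_ne_zero_iff.mpr ha
  have hb' : ‖b‖ ≠ 0 := norm_ne_zero_iff.mpr hb
  rw [norm_sub_sq_real, norm_sub_sq_real, real_inner_smul_left, real_inner_smul_right,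
    norm_smul, norm_smul, Real.norm_eq_abs, Real.norm_eq_abs, abs_inv, abs_inv, abs_norm,
    abs_norm, inv_mul_cancel₀ ha', inv_mul_cancel₀ hb']
  field_simp
  ring

theorem mul_norm_inv_smul_sub_le {ρ : ℝ} (hρ : 0 ≤ ρ) {a b : E} (ha : ρ ≤ ‖a‖) (hb : ρ ≤ ‖b‖) :
    ρ * ‖‖a‖⁻¹ • a - ‖b‖⁻¹ • b‖ ≤ ‖a - b‖ := by
  refine le_of_pow_le_pow_left₀ two_ne_zero (norm_nonneg _) ?_
  calc (ρ * ‖‖a‖⁻¹ • a - ‖b‖⁻¹ • b‖) ^ 2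
      = ρ * ρ * ‖‖a‖⁻¹ • a - ‖b‖⁻¹ • b‖ ^ 2 := by ring
    _ ≤ ‖a‖ * ‖b‖ * ‖‖a‖⁻¹ • a - ‖b‖⁻¹ • b‖ ^ 2 := by gcongr
    _ ≤ ‖a - b‖ ^ 2 := by
      rw [norm_sub_sq_eq_sq_sub_norm_add_mul_norm_inv_smul_sub_sq a b]
      exact le_add_of_nonneg_left (sq_nonneg _)

theorem lipschitzOnWith_inv_norm_smul {ρ : ℝ≥0} (hρ : 0 < ρ) :
    LipschitzOnWith ρ⁻¹ (fun a : E => ‖a‖⁻¹ • a) {a | ρ ≤ ‖a‖} := by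
  refine LipschitzOnWith.of_dist_le_mul fun a ha b hb => ?_
  rw [dist_eq_norm, dist_eq_norm, NNReal.coe_inv, inv_mul_eq_div,
    le_div_iff₀' (NNReal.coe_pos.mpr hρ)]
  exact mul_norm_inv_smul_sub_le ρ.coe_nonneg ha hb

end Normalization

theorem sphereMap_Lsq_lipschitz_general {n : ℕ}
    (g : EuclideanSpace ℝ (Fin n) → EuclideanSpace ℝ (Fin n))
    (L r : ℝ) (hL : 1 ≤ L) (hr : 0 < r)
    (hlow : ∀ x, L⁻¹ * ‖x‖ ≤ ‖g x‖)
    (hlip : LipschitzOnWith (Real.toNNReal L) g (sphere (0 : EuclideanSpace ℝ (Fin n)) r)) :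
    LipschitzOnWith (Real.toNNReal (L ^ 2))
      (fun x => (L / r) • ((r / L) • (‖g (r • x)‖⁻¹ • g (r • x))))
      (sphere (0 : EuclideanSpace ℝ (Fin n)) 1) := by
  have hL0 : 0 < L := one_pos.trans_le hL
  have hρ : 0 < (r / L).toNNReal := Real.toNNReal_pos.mpr (by positivity)
  have hdil : MapsTo (r • · : EuclideanSpace ℝ (Fin n) → _) (sphere 0 1) (sphere 0 r) :=
    fun x hx => by simp_all [norm_smul, abs_of_pos hr]
  have hg : MapsTo g (sphere 0 r) {a | (r / L).toNNReal ≤ ‖a‖} := fun x hx => by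
    have := hlow x
    simp_all [div_eq_inv_mul]
  have hK : Real.toNNReal (L ^ 2) = (r / L).toNNReal⁻¹ * L.toNNReal * ‖r‖₊ := by
    rw [← NNReal.coe_inj, NNReal.coe_mul, NNReal.coe_mul, NNReal.coe_inv,
      Real.coe_toNNReal _ (by positivity), Real.coe_toNNReal _ (div_pos hr hL0).le,
      Real.coe_toNNReal _ hL0.le, coe_nnnorm, Real.norm_of_nonneg hr.le]
    field_simp
  have hf : (fun x => (L / r) • ((r / L) • (‖g (r • x)‖⁻¹ • g (r • x)))) =
      (fun a => ‖a‖⁻¹ • a) ∘ g ∘ (r • ·) := by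
    have hc : L / r * (r / L) = 1 := by field_simp
    funext x
    rw [smul_smul, hc, one_smul]
    rfl
  rw [hK, hf]
  exact ((lipschitzOnWith_inv_norm_smul hρ).comp hlip hg).comp
    (lipschitzWith_smul r).lipschitzOnWith hdil

/-- If `g` satisfies `L⁻¹‖x‖ ≤ ‖g x‖ ≤ L‖x‖` and is `L`-Lipschitz on the sphere
`∂B(0,r)`, then the map `h(x) = (L/r)·p(g(r·x))` of the unit sphere, where `p` is the
radial projection onto `∂B(0, r/L)`, is `L²`-Lipschitz. -/
theorem sphereMap_Lsq_lipschitz {n : ℕ} (hn : 2 ≤ n)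
    (g : EuclideanSpace ℝ (Fin n) → EuclideanSpace ℝ (Fin n))
    (L r : ℝ) (hL : 1 ≤ L) (hr : 0 < r)
    (hlow : ∀ x, L⁻¹ * ‖x‖ ≤ ‖g x‖) (hup : ∀ x, ‖g x‖ ≤ L * ‖x‖)
    (hlip : LipschitzOnWith (Real.toNNReal L) g (sphere (0 : EuclideanSpace ℝ (Fin n)) r)) :
    LipschitzOnWith (Real.toNNReal (L ^ 2))
      (fun x => (L / r) • ((r / L) • (‖g (r • x)‖⁻¹ • g (r • x))))
      (sphere (0 : EuclideanSpace ℝ (Fin n)) 1) :=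
  sphereMap_Lsq_lipschitz_general g L r hL hr hlow hlip
end
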